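/- Let M₂ be the constant-domain Kripke model whose worlds are all quasi-partitions with accessibility ⊴, domain ℕ₊, V(P,(A,B,C)) = A ∪ B, V(Q,(A,B,C)) = A, and the propositional letter S true at (A,B,C) iff w ⊴ (A,B,C) and w ≠ (A,B,C), where w = (2ℕ₊, ∅, 2ℕ₊+1). Then at the world w the sentence ∀x(P(x) → (Q(x) ∨ S)) → S fails. -/
import Mathlib

set_option linter.constructorNameAsVariable false

/-- A quasi-partition of the positive natural numbers. -/
@[ext] structure QP where
  A : Set ℕ+
  B : Set ℕ+
  C : Set ℕ+
  union_eq : A ∪ B ∪ C = Set.univ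
  dAB : Disjoint A B
  dAC : Disjoint A C
  dBC : Disjoint B C
  infA : A.Infinite
  infC : C.Infinite
  hB : B = ∅ ∨ B.Infinite

/-- The relation ⊴ on quasi-partitions. -/
def QP.le (p q : QP) : Prop := p.A ⊆ q.A ∧ q.C ⊆ p.C

lemma QP.mem_cases (p : QP) (x : ℕ+) : x ∈ p.A ∨ x ∈ p.B ∨ x ∈ p.C := by
  have hx : x ∈ p.A ∪ p.B ∪ p.C := by rw [p.union_eq]; trivial
  rcases hx with (h | h) | h
  · exact Or.inl h
  · exact Or.inr (Or.inl h)
  · exact Or.inr (Or.inr h)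

lemma QP.B_compl (p : QP) : p.B = (p.A ∪ p.C)ᶜ := by
  ext x
  simp only [Set.mem_compl_iff, Set.mem_union]
  constructor
  · intro hx
    push_neg
    exact ⟨fun hA => Set.disjoint_left.mp p.dAB hA hx,
           Set.disjoint_left.mp p.dBC hx⟩
  · intro hx
    push_neg at hx
    rcases p.mem_cases x with h | h | h
    · exact absurd h hx.1
    · exact h
    · exact absurd h hx.2

lemma QP.le_refl (p : QP) : p.le p := ⟨subset_rfl, subset_rfl⟩

lemma QP.le_trans {p q r : QP} (h1 : p.le q) (h2 : q.le r) : p.le r :=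
  ⟨h1.1.trans h2.1, h2.2.trans h1.2⟩

lemma QP.le_antisymm {p q : QP} (h1 : p.le q) (h2 : q.le p) : p = q := by
  have hA : p.A = q.A := Set.Subset.antisymm h1.1 h2.1
  have hC : p.C = q.C := Set.Subset.antisymm h2.2 h1.2
  have hBc : p.B = q.B := by rw [p.B_compl, q.B_compl, hA, hC]
  exact QP.ext hA hBc hC

lemma QP.monoP {p q : QP} (h : p.le q) : p.A ∪ p.B ⊆ q.A ∪ q.B := by
  intro x hx
  have hxc : x ∉ p.C := by
    rcases hx with h1 | h1
    · exact Set.disjoint_left.mp p.dAC h1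
    · exact Set.disjoint_left.mp p.dBC h1
  have hqc : x ∉ q.C := fun hc => hxc (h.2 hc)
  rcases q.mem_cases x with h1 | h1 | h1
  · exact Or.inl h1
  · exact Or.inr h1
  · exact absurd h1 hqc

lemma infinite_mod {m r : ℕ} (hm : 0 < m) (hr : r < m) :
    {n : ℕ+ | (n : ℕ) % m = r}.Infinite := by
  apply Set.infinite_of_injective_forall_mem
    (f := fun k : ℕ => (⟨m * (k + 1) + r, Nat.add_pos_left (Nat.mul_pos hm k.succ_pos) r⟩ : ℕ+))
  · intro k j h
    have h' : m * (k + 1) + r = m * (j + 1) + r :=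
      congrArg (fun x : ℕ+ => (x : ℕ)) h
    have := Nat.eq_of_mul_eq_mul_left hm (Nat.add_right_cancel h')
    omega
  · intro k
    show (m * (k + 1) + r) % m = r
    rw [add_comm, Nat.add_mul_mod_self_left, Nat.mod_eq_of_lt hr]

def v1 : Set ℕ+ := {n | (n : ℕ) % 3 = 0}
def v2 : Set ℕ+ := {n | (n : ℕ) % 3 = 1}
def v3 : Set ℕ+ := {n | (n : ℕ) % 3 = 2}
def w1 : Set ℕ+ := {n | (n : ℕ) % 2 = 0}
def w3 : Set ℕ+ := {n | (n : ℕ) % 2 = 1}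

/-- The quasi-partition v = (3ℕ₊, 3ℕ₊+1, 3ℕ₊+2). -/
def vQP : QP where
  A := v1
  B := v2
  C := v3
  union_eq := by ext n; simp only [v1, v2, v3, Set.mem_union, Set.mem_setOf_eq, Set.mem_univ, iff_true]; omega
  dAB := by rw [Set.disjoint_left]; intro n h1 h2; simp only [v1, v2, Set.mem_setOf_eq] at h1 h2; omega
  dAC := by rw [Set.disjoint_left]; intro n h1 h2; simp only [v1, v3, Set.mem_setOf_eq] at h1 h2; omega
  dBC := by rw [Set.disjoint_left]; intro n h1 h2; simp only [v2, v3, Set.mem_setOf_eq] at h1 h2; omega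
  infA := infinite_mod (by norm_num) (by norm_num)
  infC := infinite_mod (by norm_num) (by norm_num)
  hB := Or.inr (infinite_mod (by norm_num) (by norm_num))

/-- The quasi-partition w = (2ℕ₊, ∅, 2ℕ₊+1). -/
def wQP : QP where
  A := w1
  B := ∅
  C := w3
  union_eq := by ext n; simp only [w1, w3, Set.mem_union, Set.mem_setOf_eq, Set.mem_empty_iff_false, Set.mem_univ, iff_true, or_false]; omega
  dAB := by simp
  dAC := by rw [Set.disjoint_left]; intro n h1 h2; simp only [w1, w3, Set.mem_setOf_eq] at h1 h2; omega
  dBC := by simp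
  infA := infinite_mod (by norm_num) (by norm_num)
  infC := infinite_mod (by norm_num) (by norm_num)
  hB := Or.inl rfl

/-- The relation ≺₁ on quasi-partitions. -/
def prec1 (p q : QP) : Prop :=
  p.le q ∧ ((vQP.le p ∧ (p.B ∩ v2).Infinite) → (q.B ∩ v2).Infinite)

lemma prec1_refl (p : QP) : prec1 p p := ⟨p.le_refl, fun h => h.2⟩

lemma prec1_trans {p q r : QP} (h1 : prec1 p q) (h2 : prec1 q r) : prec1 p r := by
  refine ⟨QP.le_trans h1.1 h2.1, fun h => ?_⟩
  exact h2.2 ⟨QP.le_trans h.1 h1.1, h1.2 h⟩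


/-- A relational signature (predicate symbols with arities; no function symbols). -/
structure Signature where
  Pred : Type
  arity : Pred → ℕ

/-- Formulas of first-order bi-intuitionistic logic in context `n`
(de Bruijn style: free variables are `Fin n`). -/
inductive Fml (S : Signature) : ℕ → Type where
  | atom : {n : ℕ} → (P : S.Pred) → (Fin (S.arity P) → Fin n) → Fml S n
  | bot {n} : Fml S n
  | top {n} : Fml S n
  | and {n} : Fml S n → Fml S n → Fml S n
  | or {n} : Fml S n → Fml S n → Fml S n
  | imp {n} : Fml S n → Fml S n → Fml S n
  | coimp {n} : Fml S n → Fml S n → Fml S n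
  | all {n} : Fml S (n + 1) → Fml S n
  | ex {n} : Fml S (n + 1) → Fml S n

/-- A constant-domain Kripke model for first-order bi-intuitionistic logic. -/
structure KModel (S : Signature) where
  W : Type
  R : W → W → Prop
  refl : ∀ w, R w w
  trans : ∀ {u v w}, R u v → R v w → R u w
  D : Type
  dne : Nonempty D
  V : (P : S.Pred) → W → Set (Fin (S.arity P) → D)
  mono : ∀ (P : S.Pred) {w v : W}, R w v → V P w ⊆ V P v

/-- The forcing relation for constant-domain Kripke semantics. -/
def force {S : Signature} (M : KModel S) :
    {n : ℕ} → M.W → (Fin n → M.D) → Fml S n → Prop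
  | _, w, ρ, .atom P ts => (fun i => ρ (ts i)) ∈ M.V P w
  | _, _, _, .bot => False
  | _, _, _, .top => True
  | _, w, ρ, .and φ ψ => force M w ρ φ ∧ force M w ρ ψ
  | _, w, ρ, .or φ ψ => force M w ρ φ ∨ force M w ρ ψ
  | _, w, ρ, .imp φ ψ => ∀ v, M.R w v → force M v ρ φ → force M v ρ ψ
  | _, w, ρ, .coimp φ ψ => ∃ v, M.R v w ∧ force M v ρ φ ∧ ¬ force M v ρ ψ
  | _, w, ρ, .all φ => ∀ a : M.D, force M w (Fin.snoc ρ a) φ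
  | _, w, ρ, .ex φ => ∃ a : M.D, force M w (Fin.snoc ρ a) φ

/-- The bi-asimulation conditions: `A` relates `M₀`-pointed-tuples to `M₁`-pointed-tuples,
`B` the converse direction. -/
structure IsBiAsim (S : Signature) (M₀ M₁ : KModel S)
    (A : ∀ n, M₀.W → (Fin n → M₀.D) → M₁.W → (Fin n → M₁.D) → Prop)
    (B : ∀ n, M₁.W → (Fin n → M₁.D) → M₀.W → (Fin n → M₀.D) → Prop) : Prop where
  atomA : ∀ {n} {w da v db}, A n w da v db → ∀ (P : S.Pred) (ts : Fin (S.arity P) → Fin n),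
    (fun i => da (ts i)) ∈ M₀.V P w → (fun i => db (ts i)) ∈ M₁.V P v
  atomB : ∀ {n} {v db w da}, B n v db w da → ∀ (P : S.Pred) (ts : Fin (S.arity P) → Fin n),
    (fun i => db (ts i)) ∈ M₁.V P v → (fun i => da (ts i)) ∈ M₀.V P w
  backA : ∀ {n} {w da v db}, A n w da v db →
    ∀ v₀, M₁.R v v₀ → ∃ w₀, M₀.R w w₀ ∧ A n w₀ da v₀ db ∧ B n v₀ db w₀ da
  backB : ∀ {n} {v db w da}, B n v db w da →
    ∀ w₀, M₀.R w w₀ → ∃ v₀, M₁.R v v₀ ∧ B n v₀ db w₀ da ∧ A n w₀ da v₀ db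
  forthA : ∀ {n} {w da v db}, A n w da v db →
    ∀ w₀, M₀.R w₀ w → ∃ v₀, M₁.R v₀ v ∧ A n w₀ da v₀ db ∧ B n v₀ db w₀ da
  forthB : ∀ {n} {v db w da}, B n v db w da →
    ∀ v₀, M₁.R v₀ v → ∃ w₀, M₀.R w₀ w ∧ B n v₀ db w₀ da ∧ A n w₀ da v₀ db
  leftA : ∀ {n} {w da v db}, A n w da v db →
    ∀ b : M₁.D, ∃ a : M₀.D, A (n + 1) w (Fin.snoc da a) v (Fin.snoc db b)
  leftB : ∀ {n} {v db w da}, B n v db w da →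
    ∀ a : M₀.D, ∃ b : M₁.D, B (n + 1) v (Fin.snoc db b) w (Fin.snoc da a)
  rightA : ∀ {n} {w da v db}, A n w da v db →
    ∀ a : M₀.D, ∃ b : M₁.D, A (n + 1) w (Fin.snoc da a) v (Fin.snoc db b)
  rightB : ∀ {n} {v db w da}, B n v db w da →
    ∀ b : M₁.D, ∃ a : M₀.D, B (n + 1) v (Fin.snoc db b) w (Fin.snoc da a)

inductive Pred12 | P | Q | S
abbrev Sig12 : Signature := ⟨Pred12, fun x => match x with | .S => 0 | _ => 1⟩


/-- The model M₂' over {P,Q,S}, with the propositional letter S true strictly above w. -/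
@[reducible] def M2mod : KModel Sig12 where
  W := QP
  R := QP.le
  refl := QP.le_refl
  trans := QP.le_trans
  D := ℕ+
  dne := ⟨1⟩
  V := fun P p => match P with
    | .P => {t | t 0 ∈ p.A ∪ p.B}
    | .Q => {t | t 0 ∈ p.A}
    | .S => {_t | wQP.le p ∧ p ≠ wQP}
  mono := by
    intro P w v h t ht
    cases P
    · exact QP.monoP h ht
    · exact h.1 ht
    · refine ⟨QP.le_trans ht.1 h, fun hv => ht.2 ?_⟩
      subst hv
      exact QP.le_antisymm h ht.1


/-- The sentence ψ = ∀x(P(x) → (Q(x) ∨ S)) → S. -/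
def psi12 : Fml Sig12 0 :=
  .imp
    (.all (.imp (.atom .P ![0]) (.or (.atom .Q ![0]) (.atom .S Fin.elim0))))
    (.atom .S Fin.elim0)


/-- ψ = ∀x(P(x) → (Q(x) ∨ S)) → S fails at w in M₂'. -/
theorem stmt12 : ¬ force M2mod wQP Fin.elim0 psi12 := by
  intro h
  have hS := h wQP (QP.le_refl _) ?_
  · exact hS.2 rfl
  · intro a q hq hP
    by_cases hqw : q = wQP
    · subst hqw
      rcases hP with hA | hB
      · exact Or.inl hA
      · exact absurd hB (by simp [wQP])
    · exact Or.inr ⟨hq, hqw⟩
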